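/- Let N ≥ 2 be an integer and let D, L be finite sets of integers with #D = #L = m. Then the matrix (1/√m)·(e^{2πi dℓ/N})_{d∈D, ℓ∈L} is unitary if and only if for every ξ ∈ ℝ, ∑_{ℓ∈L} |M_{D/N}(ξ+ℓ)|² = 1, where M_{D/N}(x) = (1/m)·∑_{d∈D} e^{-2πi dx/N}. -/

import Mathlib

open Matrix

noncomputable def ce (θ : ℝ) : ℂ := Complex.exp ((θ : ℂ) * Complex.I)

lemma ce_add (a b : ℝ) : ce (a + b) = ce a * ce b := by
  simp [ce, ← Complex.exp_add, add_mul]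

lemma ce_zero : ce 0 = 1 := by simp [ce]

lemma ce_conj (a : ℝ) : (starRingEnd ℂ) (ce a) = ce (-a) := by
  simp [ce, ← Complex.exp_conj, _root_.map_mul, Complex.conj_I]

/-- character as a monoid hom on `Multiplicative ℝ` -/
noncomputable def chara (c : ℝ) : Multiplicative ℝ →* ℂ where
  toFun ξ := ce (c * Multiplicative.toAdd ξ)
  map_one' := by simp [ce_zero]
  map_mul' x y := by
    simp only [toAdd_mul, mul_add, ce_add]

lemma chara_inj : Function.Injective chara := by
  intro a b h
  by_contra hab
  have h1 : ∀ ξ : ℝ, ce (a * ξ) = ce (b * ξ) := fun ξ => by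
    have := DFunLike.congr_fun h (Multiplicative.ofAdd ξ)
    simpa [chara] using this
  have hne : a - b ≠ 0 := sub_ne_zero.mpr hab
  have habsne : |a - b| ≠ 0 := abs_ne_zero.mpr hne
  set ξ := Real.pi / |a - b| with hξ
  have h2 : Complex.exp ((((a - b) * ξ : ℝ) : ℂ) * Complex.I) = 1 := by
    have h0 := h1 ξ
    simp only [ce] at h0
    have : Complex.exp (((a * ξ : ℝ) : ℂ) * Complex.I - ((b * ξ : ℝ) : ℂ) * Complex.I) = 1 := by
      rw [Complex.exp_sub, h0, div_self (Complex.exp_ne_zero _)]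
    convert this using 2
    push_cast
    ring
  rw [Complex.exp_eq_one_iff] at h2
  obtain ⟨n, hn⟩ := h2
  have habs : (a - b) * ξ = n * (2 * Real.pi) := by
    have him := congrArg Complex.im hn
    simp [Complex.mul_im] at him
    convert him using 1
  have hπ := Real.pi_pos
  have h3 : (a - b) / |a - b| = 2 * n := by
    rw [hξ] at habs
    field_simp at habs ⊢
    nlinarith [habs]
  have h4 : abs ((a - b) / abs (a - b)) = 1 := by
    rw [abs_div, abs_abs, div_self habsne]
  rw [h3] at h4
  have h5 : |(2 * n : ℤ)| = 1 := by
    have : |((2 * n : ℤ) : ℝ)| = 1 := by push_cast; convert h4 using 2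
    exact_mod_cast this
  rw [abs_eq (by norm_num : (0:ℤ) ≤ 1)] at h5
  omega

lemma indepZ (K0 : Finset ℤ) (c : ℤ → ℝ) (hc : Set.InjOn c K0) (b : ℤ → ℂ)
    (h : ∀ ξ : ℝ, ∑ k ∈ K0, b k * ce (c k * ξ) = 0) : ∀ k ∈ K0, b k = 0 := by
  have li : LinearIndependent ℂ (fun k : K0 => (chara (c (k : ℤ)) : Multiplicative ℝ → ℂ)) :=
    (linearIndependent_monoidHom (Multiplicative ℝ) ℂ).comp
      (fun k : K0 => chara (c (k : ℤ)))
      (fun x y hxy => Subtype.ext (hc x.2 y.2 (chara_inj hxy)))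
  have key := Fintype.linearIndependent_iff.mp li (fun k : K0 => b k) ?_
  · intro k hk
    exact key ⟨k, hk⟩
  · funext ξ
    have := h (Multiplicative.toAdd ξ)
    rw [← Finset.sum_coe_sort K0 (fun k => b k * ce (c k * Multiplicative.toAdd ξ))] at this
    simpa [chara, Finset.sum_apply] using this

/-- The mask function `M_A(x) = (1/#A) ∑_{a∈A} e^{-2πi a x}`. -/
noncomputable def mask (A : Finset ℤ) (x : ℝ) : ℂ :=
  (A.card : ℂ)⁻¹ * ∑ a ∈ A, Complex.exp ((-(2 * Real.pi * (a : ℝ) * x) : ℝ) * Complex.I)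

/-- The matrix `(1/√m)(e^{2πi dℓ/N})_{d∈D,ℓ∈L}`. -/
noncomputable def hadMatrix (N : ℤ) (D L : Finset ℤ) : Matrix D L ℂ :=
  Matrix.of fun d l => ((Real.sqrt D.card : ℝ) : ℂ)⁻¹ *
    Complex.exp (((2 * Real.pi * ((d : ℤ) : ℝ) * ((l : ℤ) : ℝ) / (N : ℝ)) : ℝ) * Complex.I)

/-- The matrix `(1/√m)(e^{2πi dℓ/N})` is unitary. -/
def IsUnitaryHadamard (N : ℤ) (D L : Finset ℤ) : Prop :=
  hadMatrix N D L * (hadMatrix N D L)ᴴ = 1 ∧ (hadMatrix N D L)ᴴ * hadMatrix N D L = 1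

lemma mask_eq (D : Finset ℤ) (x : ℝ) :
    mask D x = (D.card : ℂ)⁻¹ * ∑ a ∈ D, ce (-(2 * Real.pi * (a : ℝ) * x)) := rfl

lemma hadMatrix_eq (N : ℤ) (D L : Finset ℤ) (d : D) (l : L) :
    hadMatrix N D L d l = ((Real.sqrt D.card : ℝ) : ℂ)⁻¹ *
      ce (2 * Real.pi * ((d : ℤ) : ℝ) * ((l : ℤ) : ℝ) / (N : ℝ)) := rfl

lemma mask_normSq (D : Finset ℤ) (x : ℝ) :
    ((‖mask D x‖ ^ 2 : ℝ) : ℂ)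
      = ((D.card : ℂ))⁻¹ ^ 2 * ∑ p ∈ D ×ˢ D, ce (-(2 * Real.pi * (((p.1 : ℤ) : ℝ) - ((p.2 : ℤ) : ℝ)) * x)) := by
  have h1 : ((‖mask D x‖ ^ 2 : ℝ) : ℂ) = mask D x * (starRingEnd ℂ) (mask D x) := by
    rw [Complex.mul_conj]
    norm_cast
    simp [Complex.normSq_eq_norm_sq]
  rw [h1, mask_eq, _root_.map_mul, map_sum]
  have hc : (starRingEnd ℂ) ((D.card : ℂ))⁻¹ = (D.card : ℂ)⁻¹ := by
    rw [map_inv₀, map_natCast]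
  rw [hc]
  have : (∑ a ∈ D, ce (-(2 * Real.pi * (a : ℝ) * x))) *
      (∑ b ∈ D, (starRingEnd ℂ) (ce (-(2 * Real.pi * (b : ℝ) * x))))
      = ∑ p ∈ D ×ˢ D, ce (-(2 * Real.pi * (((p.1 : ℤ) : ℝ) - ((p.2 : ℤ) : ℝ)) * x)) := by
    rw [Finset.sum_mul_sum]
    rw [Finset.sum_product]
    apply Finset.sum_congr rfl; intro a _
    apply Finset.sum_congr rfl; intro b _
    rw [ce_conj, neg_neg, ← ce_add]
    congr 1
    ring
  rw [← this]
  ring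

lemma gram_entry (N : ℤ) (m : ℕ) (D L : Finset ℤ) (hD : D.card = m)
    (d d' : D) :
    (hadMatrix N D L * (hadMatrix N D L)ᴴ) d d'
      = (m : ℂ)⁻¹ * ∑ l ∈ L, ce (2 * Real.pi * (((d : ℤ) : ℝ) - ((d' : ℤ) : ℝ)) * ((l : ℤ) : ℝ) / (N : ℝ)) := by
  rw [Matrix.mul_apply]
  have hsq : ((Real.sqrt D.card : ℝ) : ℂ)⁻¹ * ((Real.sqrt D.card : ℝ) : ℂ)⁻¹ = (m : ℂ)⁻¹ := by
    rw [← mul_inv]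
    congr 1
    norm_cast
    rw [Real.mul_self_sqrt (by positivity)]
    exact_mod_cast congrArg (fun n : ℕ => (n : ℝ)) hD
  have hterm : ∀ l : L, hadMatrix N D L d l * (hadMatrix N D L)ᴴ l d'
      = (m : ℂ)⁻¹ * ce (2 * Real.pi * (((d : ℤ) : ℝ) - ((d' : ℤ) : ℝ)) * ((l : ℤ) : ℝ) / (N : ℝ)) := by
    intro l
    rw [Matrix.conjTranspose_apply, hadMatrix_eq, hadMatrix_eq]
    rw [show star (((Real.sqrt D.card : ℝ) : ℂ)⁻¹ * ce (2 * Real.pi * ((d' : ℤ) : ℝ) * ((l : ℤ) : ℝ) / (N : ℝ)))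
        = ((Real.sqrt D.card : ℝ) : ℂ)⁻¹ * ce (-(2 * Real.pi * ((d' : ℤ) : ℝ) * ((l : ℤ) : ℝ) / (N : ℝ))) from by
      rw [star_mul', star_inv₀, Complex.star_def, Complex.conj_ofReal, ce_conj]]
    rw [show ((Real.sqrt D.card : ℝ) : ℂ)⁻¹ * ce (2 * Real.pi * ((d : ℤ) : ℝ) * ((l : ℤ) : ℝ) / (N : ℝ)) *
        (((Real.sqrt D.card : ℝ) : ℂ)⁻¹ * ce (-(2 * Real.pi * ((d' : ℤ) : ℝ) * ((l : ℤ) : ℝ) / (N : ℝ))))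
        = (((Real.sqrt D.card : ℝ) : ℂ)⁻¹ * ((Real.sqrt D.card : ℝ) : ℂ)⁻¹) *
          (ce (2 * Real.pi * ((d : ℤ) : ℝ) * ((l : ℤ) : ℝ) / (N : ℝ)) *
           ce (-(2 * Real.pi * ((d' : ℤ) : ℝ) * ((l : ℤ) : ℝ) / (N : ℝ)))) from by ring]
    rw [hsq, ← ce_add]
    congr 2
    ring
  calc ∑ l : L, hadMatrix N D L d l * (hadMatrix N D L)ᴴ l d'
      = ∑ l : L, (m : ℂ)⁻¹ * ce (2 * Real.pi * (((d : ℤ) : ℝ) - ((d' : ℤ) : ℝ)) * ((l : ℤ) : ℝ) / (N : ℝ)) :=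
        Finset.sum_congr rfl fun l _ => hterm l
    _ = (m : ℂ)⁻¹ * ∑ l : L, ce (2 * Real.pi * (((d : ℤ) : ℝ) - ((d' : ℤ) : ℝ)) * ((l : ℤ) : ℝ) / (N : ℝ)) := by
        rw [Finset.mul_sum]
    _ = _ := by
        rw [← Finset.sum_coe_sort L (fun l : ℤ => ce (2 * Real.pi * (((d : ℤ) : ℝ) - ((d' : ℤ) : ℝ)) * (l : ℝ) / (N : ℝ)))]

lemma rhs_eq (N : ℤ) (D L : Finset ℤ) (ξ : ℝ) :
    ((∑ l ∈ L, ‖mask D ((ξ + (l : ℝ)) / (N : ℝ))‖ ^ 2 : ℝ) : ℂ)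
      = ((D.card : ℂ))⁻¹ ^ 2 * ∑ p ∈ D ×ˢ D,
          ce (-(2 * Real.pi * (((p.1 : ℤ) : ℝ) - ((p.2 : ℤ) : ℝ)) * ξ / (N : ℝ)))
            * (∑ l ∈ L, ce (-(2 * Real.pi * (((p.1 : ℤ) : ℝ) - ((p.2 : ℤ) : ℝ)) * ((l : ℤ) : ℝ) / (N : ℝ)))) := by
  rw [Complex.ofReal_sum]
  rw [Finset.sum_congr rfl (fun (l : ℤ) _ => mask_normSq D ((ξ + (l : ℝ)) / (N : ℝ)))]
  rw [← Finset.mul_sum, Finset.sum_comm]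
  congr 1
  apply Finset.sum_congr rfl
  intro p _
  rw [Finset.mul_sum]
  apply Finset.sum_congr rfl
  intro l _
  rw [← ce_add]
  congr 1
  ring

theorem stmt_0 (N : ℤ) (hN : 2 ≤ N) (m : ℕ) (hm : 0 < m) (D L : Finset ℤ)
    (hD : D.card = m) (hL : L.card = m) :
    IsUnitaryHadamard N D L ↔
      ∀ ξ : ℝ, ∑ l ∈ L, ‖mask D ((ξ + (l : ℝ)) / (N : ℝ))‖ ^ 2 = 1 := by
  classical
  have hπ := Real.pi_pos
  have hN0 : (N : ℝ) ≠ 0 := by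
    have : N ≠ 0 := by omega
    exact_mod_cast this
  have hm0 : (m : ℂ) ≠ 0 := Nat.cast_ne_zero.mpr hm.ne'
  set S : ℤ → ℂ := fun k => ∑ l ∈ L, ce (-(2 * Real.pi * (k : ℝ) * (l : ℝ) / (N : ℝ))) with hSdef
  have hS0 : S 0 = (m : ℂ) := by
    have : ∀ l ∈ L, ce (-(2 * Real.pi * ((0 : ℤ) : ℝ) * (l : ℝ) / (N : ℝ))) = 1 := by
      intro l _
      norm_num [ce_zero]
    simp only [hSdef]
    rw [Finset.sum_congr rfl this, Finset.sum_const, hL, nsmul_eq_mul, mul_one]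
  have hconjS : ∀ k : ℤ, (starRingEnd ℂ) (S k)
      = ∑ l ∈ L, ce (2 * Real.pi * (k : ℝ) * (l : ℝ) / (N : ℝ)) := by
    intro k
    simp only [hSdef]
    rw [map_sum]
    exact Finset.sum_congr rfl fun l _ => by rw [ce_conj, neg_neg]
  -- Gram characterization
  have hGram : (hadMatrix N D L * (hadMatrix N D L)ᴴ = 1) ↔
      ∀ d ∈ D, ∀ d' ∈ D, S (d - d') = if d = d' then (m : ℂ) else 0 := by
    have entry : ∀ (d d' : D), (hadMatrix N D L * (hadMatrix N D L)ᴴ) d d'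
        = (m : ℂ)⁻¹ * (starRingEnd ℂ) (S ((d : ℤ) - (d' : ℤ))) := by
      intro d d'
      rw [gram_entry N m D L hD, hconjS]
      congr 1
      apply Finset.sum_congr rfl
      intro l _
      congr 1
      push_cast
      ring
    constructor
    · intro h1 d hd d' hd'
      have he := Matrix.ext_iff.mpr h1 ⟨d, hd⟩ ⟨d', hd'⟩
      rw [entry, Matrix.one_apply] at he
      have hsub : ((⟨d, hd⟩ : D) = ⟨d', hd'⟩) ↔ d = d' := Subtype.mk_eq_mk
      by_cases hdd : d = d'
      · rw [if_pos hdd]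
        rw [if_pos (hsub.mpr hdd)] at he
        have hc : (starRingEnd ℂ) (S (d - d')) = (m : ℂ) := by
          field_simp at he
          simpa using he
        have := congrArg (starRingEnd ℂ) hc
        simpa using this
      · rw [if_neg hdd]
        rw [if_neg (fun h => hdd (hsub.mp h))] at he
        have hc : (starRingEnd ℂ) (S (d - d')) = 0 := by
          rcases mul_eq_zero.mp he with h | h
          · exact absurd h (inv_ne_zero hm0)
          · exact h
        have := congrArg (starRingEnd ℂ) hc
        simpa using this
    · intro h
      ext i j
      rw [entry, Matrix.one_apply]
      have hij := h (i : ℤ) i.2 (j : ℤ) j.2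
      by_cases hdd : i = j
      · rw [if_pos hdd]
        rw [if_pos (Subtype.ext_iff.mp hdd)] at hij
        rw [hij]
        rw [map_natCast]
        field_simp
      · rw [if_neg hdd]
        rw [if_neg (fun h => hdd (Subtype.ext h))] at hij
        rw [hij]
        simp
  -- RHS characterization
  have hRHSeq : ∀ ξ : ℝ, (∑ l ∈ L, ‖mask D ((ξ + (l : ℝ)) / (N : ℝ))‖ ^ 2 = 1) ↔
      (∑ p ∈ D ×ˢ D, ce (-(2 * Real.pi * (((p.1 : ℤ) : ℝ) - ((p.2 : ℤ) : ℝ)) * ξ / (N : ℝ)))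
          * S (p.1 - p.2) = (m : ℂ) ^ 2) := by
    intro ξ
    have hcast : (∑ l ∈ L, ‖mask D ((ξ + (l : ℝ)) / (N : ℝ))‖ ^ 2 = 1)
        ↔ ((∑ l ∈ L, ‖mask D ((ξ + (l : ℝ)) / (N : ℝ))‖ ^ 2 : ℝ) : ℂ) = 1 := by
      constructor
      · intro h; rw [h]; norm_num
      · intro h; exact_mod_cast h
    rw [hcast, rhs_eq N D L ξ, hD]
    have hsame : ∀ p ∈ D ×ˢ D,
        ce (-(2 * Real.pi * (((p.1 : ℤ) : ℝ) - ((p.2 : ℤ) : ℝ)) * ξ / (N : ℝ)))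
            * (∑ l ∈ L, ce (-(2 * Real.pi * (((p.1 : ℤ) : ℝ) - ((p.2 : ℤ) : ℝ)) * ((l : ℤ) : ℝ) / (N : ℝ))))
          = ce (-(2 * Real.pi * (((p.1 : ℤ) : ℝ) - ((p.2 : ℤ) : ℝ)) * ξ / (N : ℝ))) * S (p.1 - p.2) := by
      intro p _
      congr 1
      simp only [hSdef]
      apply Finset.sum_congr rfl
      intro l _
      congr 2
      push_cast
      ring
    rw [Finset.sum_congr rfl hsame]
    constructor
    · intro h
      have := congrArg (fun z => (m : ℂ) ^ 2 * z) h
      rw [← mul_assoc] at this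
      rw [show (m : ℂ) ^ 2 * ((m : ℂ))⁻¹ ^ 2 = 1 by field_simp] at this
      simpa using this
    · intro h
      rw [h]
      field_simp
  constructor
  · rintro ⟨h1, -⟩ ξ
    rw [hRHSeq ξ]
    have hs := hGram.mp h1
    rw [Finset.sum_product]
    have step : ∀ d ∈ D, ∀ d' ∈ D,
        ce (-(2 * Real.pi * ((d : ℝ) - (d' : ℝ)) * ξ / (N : ℝ))) * S (d - d')
          = if d' = d then (m : ℂ) else 0 := by
      intro d hd d' hd'
      rw [hs d hd d' hd']
      by_cases h : d = d'
      · subst h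
        simp [ce_zero]
      · simp [h, Ne.symm h]
    calc ∑ d ∈ D, ∑ d' ∈ D,
          ce (-(2 * Real.pi * ((d : ℝ) - (d' : ℝ)) * ξ / (N : ℝ))) * S (d - d')
        = ∑ d ∈ D, ∑ d' ∈ D, (if d' = d then (m : ℂ) else 0) :=
          Finset.sum_congr rfl fun d hd => Finset.sum_congr rfl fun d' hd' => step d hd d' hd'
      _ = ∑ d ∈ D, (m : ℂ) := by
          apply Finset.sum_congr rfl
          intro d hd
          rw [Finset.sum_ite_eq' D d (fun _ => (m : ℂ)), if_pos hd]
      _ = (m : ℂ) ^ 2 := by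
          rw [Finset.sum_const, hD, nsmul_eq_mul]
          ring
  · intro h
    have h2 : ∀ ξ : ℝ, ∑ p ∈ D ×ˢ D,
        ce (-(2 * Real.pi * (((p.1 : ℤ) : ℝ) - ((p.2 : ℤ) : ℝ)) * ξ / (N : ℝ)))
          * S (p.1 - p.2) = (m : ℂ) ^ 2 := fun ξ => (hRHSeq ξ).mp (h ξ)
    set K0 : Finset ℤ := (D ×ˢ D).image (fun p => p.1 - p.2) with hK0
    have h0K : (0 : ℤ) ∈ K0 := by
      obtain ⟨d, hd⟩ := Finset.card_pos.mp (by rw [hD]; exact hm)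
      exact Finset.mem_image.mpr ⟨(d, d), Finset.mem_product.mpr ⟨hd, hd⟩, sub_self d⟩
    set n : ℤ → ℕ := fun k => ((D ×ˢ D).filter (fun p => p.1 - p.2 = k)).card with hn
    set b : ℤ → ℂ := fun k => (n k : ℂ) * S k - (if k = 0 then (m : ℂ) ^ 2 else 0) with hb
    have hbzero : ∀ k ∈ K0, b k = 0 := by
      apply indepZ K0 (fun k => -(2 * Real.pi * (k : ℝ) / (N : ℝ)))
      · intro x _ y _ hxy
        simp only at hxy
        have h3 := neg_inj.mp hxy
        rw [div_left_inj' hN0, mul_right_inj' (by positivity : (2 * Real.pi : ℝ) ≠ 0)] at h3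
        exact_mod_cast h3
      · intro ξ
        have e1 : ∑ k ∈ K0, ((n k : ℂ) * S k) * ce (-(2 * Real.pi * (k : ℝ) / (N : ℝ)) * ξ)
            = (m : ℂ) ^ 2 := by
          rw [← h2 ξ]
          rw [← Finset.sum_fiberwise_of_maps_to (g := fun p : ℤ × ℤ => p.1 - p.2) (t := K0)
            (fun p hp => Finset.mem_image_of_mem _ hp)
            (fun p : ℤ × ℤ => ce (-(2 * Real.pi * (((p.1 : ℤ) : ℝ) - ((p.2 : ℤ) : ℝ)) * ξ / (N : ℝ))) * S (p.1 - p.2))]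
          apply Finset.sum_congr rfl
          intro k hk
          have inner : ∀ p ∈ (D ×ˢ D).filter (fun p => p.1 - p.2 = k),
              ce (-(2 * Real.pi * (((p.1 : ℤ) : ℝ) - ((p.2 : ℤ) : ℝ)) * ξ / (N : ℝ))) * S (p.1 - p.2)
                = ce (-(2 * Real.pi * (k : ℝ) / (N : ℝ)) * ξ) * S k := by
            intro p hp
            have hpk : p.1 - p.2 = k := by
              simpa using (Finset.mem_filter.mp hp).2
            have hpkr : ((p.1 : ℤ) : ℝ) - ((p.2 : ℤ) : ℝ) = (k : ℝ) := by
              exact_mod_cast congrArg (fun z : ℤ => (z : ℝ)) hpk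
            rw [hpk, hpkr]
            congr 1
            congr 1
            ring
          rw [Finset.sum_congr rfl inner, Finset.sum_const, nsmul_eq_mul]
          simp only [hn]
          ring
        have e2 : ∑ k ∈ K0, (if k = 0 then (m : ℂ) ^ 2 else 0) * ce (-(2 * Real.pi * (k : ℝ) / (N : ℝ)) * ξ)
            = (m : ℂ) ^ 2 := by
          have : ∀ k ∈ K0, (if k = 0 then (m : ℂ) ^ 2 else 0) * ce (-(2 * Real.pi * (k : ℝ) / (N : ℝ)) * ξ)
              = (if k = 0 then (m : ℂ) ^ 2 else 0) := by
            intro k _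
            by_cases hk : k = 0
            · subst hk
              norm_num [ce_zero]
            · simp [hk]
          rw [Finset.sum_congr rfl this, Finset.sum_ite_eq' K0 0 (fun _ => (m : ℂ) ^ 2), if_pos h0K]
        calc ∑ k ∈ K0, b k * ce (-(2 * Real.pi * (k : ℝ) / (N : ℝ)) * ξ)
            = (∑ k ∈ K0, ((n k : ℂ) * S k) * ce (-(2 * Real.pi * (k : ℝ) / (N : ℝ)) * ξ))
              - ∑ k ∈ K0, (if k = 0 then (m : ℂ) ^ 2 else 0) * ce (-(2 * Real.pi * (k : ℝ) / (N : ℝ)) * ξ) := by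
              rw [← Finset.sum_sub_distrib]
              apply Finset.sum_congr rfl
              intro k _
              simp only [hb]
              ring
          _ = 0 := by rw [e1, e2, sub_self]
    have hs : ∀ d ∈ D, ∀ d' ∈ D, S (d - d') = if d = d' then (m : ℂ) else 0 := by
      intro d hd d' hd'
      by_cases hdd : d = d'
      · rw [if_pos hdd, hdd, sub_self, hS0]
      · rw [if_neg hdd]
        have hk : d - d' ∈ K0 :=
          Finset.mem_image.mpr ⟨(d, d'), Finset.mem_product.mpr ⟨hd, hd'⟩, rfl⟩
        have hbk := hbzero _ hk
        have hkne : d - d' ≠ 0 := sub_ne_zero.mpr hdd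
        have hnpos : 0 < n (d - d') := by
          apply Finset.card_pos.mpr
          exact ⟨(d, d'), Finset.mem_filter.mpr ⟨Finset.mem_product.mpr ⟨hd, hd'⟩, rfl⟩⟩
        simp only [hb, if_neg hkne, sub_zero] at hbk
        exact (mul_eq_zero.mp hbk).resolve_left (Nat.cast_ne_zero.mpr hnpos.ne')
    have h1 : hadMatrix N D L * (hadMatrix N D L)ᴴ = 1 := hGram.mpr hs
    refine ⟨h1, ?_⟩
    exact (Matrix.mul_eq_one_comm_of_equiv
      (Fintype.equivOfCardEq (by simp [Fintype.card_coe, hD, hL]))).mp h1
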